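/- arXiv:2303.06131 — 4 statements merged into one kernel-verified Lean document; each statement's English description precedes it below -/
import Mathlib

section
/- Let φ be a continuous flow on a compact metric space M and Λ a closed invariant set with the shadowing property. If x ∈ Λ is chain-recurrent for the flow restricted to Λ, then for every ε > 0 there exist z ∈ Λ with d(z, x) ≤ ε, an increasing homeomorphism h of ℝ fixing 0, and arbitrarily large times t with d(φ(h(t), z), x) ≤ ε. -/
/-!
Close the finite `δ`-chain from `x` to `x` into a periodic bi-infinite `δ`-pseudo-orbit. A
point `z` shadowing it starts `ε`-close to `x` and, at the reparametrized start `s (k N)` of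
each period, is again `ε`-close to `x`; these times are at least `k N` because every jump time
of the chain is at least `1`.
-/

open Set Filter Metric

variable {M : Type*} [MetricSpace M]

/-- A continuous flow on `M`. -/
def IsFlow (φ : ℝ → M → M) : Prop :=
  Continuous (fun p : ℝ × M => φ p.1 p.2) ∧ (∀ x, φ 0 x = x) ∧
    ∀ s t : ℝ, ∀ x, φ (s + t) x = φ s (φ t x)

/-- A fixed point (singularity) of the flow. -/
def IsFixed (φ : ℝ → M → M) (x : M) : Prop := ∀ t, φ t x = x

/-- An invariant set. -/
def Invariant (φ : ℝ → M → M) (Λ : Set M) : Prop := ∀ t : ℝ, ∀ x ∈ Λ, φ t x ∈ Λ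

/-- A reparametrization: an increasing homeomorphism of `ℝ` fixing `0`. -/
def IsRep (h : ℝ → ℝ) : Prop :=
  StrictMono h ∧ Continuous h ∧ Function.Surjective h ∧ h 0 = 0

/-- A (bi-infinite) `δ`-`T`-pseudo-orbit. -/
def IsPseudoOrbit (φ : ℝ → M → M) (δ T : ℝ) (x : ℤ → M) (t : ℤ → ℝ) : Prop :=
  ∀ i : ℤ, T ≤ t i ∧ dist (φ (t i) (x i)) (x (i + 1)) ≤ δ

/-- The partial sums `s` associated with the times `t` of a pseudo-orbit. -/
def PartialSums (t s : ℤ → ℝ) : Prop := s 0 = 0 ∧ ∀ i : ℤ, s (i + 1) = s i + t i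

/-- `y` ε-shadows the pseudo-orbit `(x, t)` (with partial sums `s`) via `h`. -/
def ShadowsWith (φ : ℝ → M → M) (ε : ℝ) (x : ℤ → M) (s : ℤ → ℝ) (y : M) (h : ℝ → ℝ) : Prop :=
  ∀ i : ℤ, ∀ τ ∈ Set.Ico (s i) (s (i + 1)), dist (φ (h τ) y) (φ (τ - s i) (x i)) ≤ ε

/-- The shadowing property on `Λ`. -/
def ShadowingOn (φ : ℝ → M → M) (Λ : Set M) : Prop :=
  ∀ ε > (0 : ℝ), ∃ δ > (0 : ℝ), ∀ (x : ℤ → M) (t s : ℤ → ℝ),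
    (∀ i, x i ∈ Λ) → IsPseudoOrbit φ δ 1 x t → PartialSums t s →
    ∃ y ∈ Λ, ∃ h : ℝ → ℝ, IsRep h ∧ ShadowsWith φ ε x s y h

/-- `p` is chain-recurrent in `Λ`: finite ε-1-pseudo-orbits from `p` back to `p`. -/
def ChainRecurrentPt (φ : ℝ → M → M) (Λ : Set M) (p : M) : Prop :=
  ∀ ε > (0 : ℝ), ∃ N : ℕ, 0 < N ∧ ∃ (x : ℕ → M) (t : ℕ → ℝ),
    x 0 = p ∧ x N = p ∧ (∀ i ≤ N, x i ∈ Λ) ∧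
    ∀ i < N, 1 ≤ t i ∧ dist (φ (t i) (x i)) (x (i + 1)) ≤ ε

def ChainRecurrentSet (φ : ℝ → M → M) (Λ : Set M) : Prop :=
  ∀ p ∈ Λ, ChainRecurrentPt φ Λ p

/-- `p` is non-wandering for the flow restricted to `Λ`. -/
def NonWanderingPt (φ : ℝ → M → M) (Λ : Set M) (p : M) : Prop :=
  ∀ ε > (0 : ℝ), ∀ T > (0 : ℝ), ∃ y ∈ Λ, dist y p ≤ ε ∧ ∃ t > T, dist (φ t y) p ≤ ε

/-- The stable set of a point `σ`. -/
def Ws (φ : ℝ → M → M) (σ : M) : Set M :=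
  {x | Tendsto (fun t => φ t x) atTop (nhds σ)}

/-- The unstable set of a point `σ`. -/
def Wu (φ : ℝ → M → M) (σ : M) : Set M :=
  {x | Tendsto (fun t => φ t x) atBot (nhds σ)}

/-- The orbit of a point. -/
def orbitOf (φ : ℝ → M → M) (p : M) : Set M := Set.range fun t => φ t p

/-- A homoclinic point attached to the singularity `σ`. -/
def HomoclinicPt (φ : ℝ → M → M) (σ p : M) : Prop :=
  ¬ IsFixed φ p ∧ p ∈ Ws φ σ ∩ Wu φ σ

/-- `σ` is attached to `Λ`: accumulated by regular (non-fixed) points of `Λ`. -/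
def Attached (φ : ℝ → M → M) (Λ : Set M) (σ : M) : Prop :=
  ∀ ε > (0 : ℝ), ∃ p ∈ Λ, dist p σ ≤ ε ∧ ¬ IsFixed φ p

section Periodize

variable {α : Type*} {N : ℕ}

def periodize (N : ℕ) (f : ℕ → α) : ℤ → α := fun i => f (i % N).toNat

lemma Int.toNat_emod_lt (hN : 0 < N) (i : ℤ) : (i % N).toNat < N := by
  have := Int.emod_nonneg i (Int.natCast_pos.2 hN).ne'
  have := Int.emod_lt_of_pos i (Int.natCast_pos.2 hN)
  omega

lemma periodize_add_one (hN : 0 < N) {f : ℕ → α} (hf : f N = f 0) (i : ℤ) :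
    periodize N f (i + 1) = f ((i % N).toNat + 1) := by
  have hnonneg := Int.emod_nonneg i (Int.natCast_pos.2 hN).ne'
  have hlt := Int.toNat_emod_lt hN i
  rw [periodize, ← Int.emod_add_emod]
  rcases (show i % N + 1 < N ∨ i % N + 1 = N by omega) with hnext | hwrap
  · rw [Int.emod_eq_of_lt (by omega) hnext]
    congr 1
    omega
  · rw [hwrap, Int.emod_self, show (i % N).toNat + 1 = N by omega, hf]
    rfl

lemma periodize_mul_self (f : ℕ → α) (k : ℤ) : periodize N f (k * N) = f 0 := by
  simp [periodize, Int.mul_emod_left]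

end Periodize

section Flow

variable {φ : ℝ → M → M}

lemma isPseudoOrbit_periodize {δ T : ℝ} {N : ℕ} (hN : 0 < N) {x : ℕ → M} {t : ℕ → ℝ}
    (hloop : x N = x 0)
    (hstep : ∀ i < N, T ≤ t i ∧ dist (φ (t i) (x i)) (x (i + 1)) ≤ δ) :
    IsPseudoOrbit φ δ T (periodize N x) (periodize N t) := by
  intro i
  rw [periodize_add_one hN hloop]
  exact hstep _ (Int.toNat_emod_lt hN i)

lemma exists_partialSums (t : ℤ → ℝ) : ∃ s, PartialSums t s := by
  refine ⟨fun i => ∑ j ∈ Finset.Ico 0 i, t j - ∑ j ∈ Finset.Ico i 0, t j, by simp, fun i => ?_⟩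
  dsimp only
  rcases le_or_gt 0 i with hi | hi
  · rw [← Finset.insert_Ico_right_eq_Ico_add_one hi, Finset.sum_insert Finset.right_notMem_Ico,
      Finset.Ico_eq_empty_of_le hi, Finset.Ico_eq_empty_of_le (show (0 : ℤ) ≤ i + 1 by omega)]
    simp only [Finset.sum_empty]
    ring
  · rw [← Finset.insert_Ico_add_one_left_eq_Ico hi, Finset.sum_insert (by simp),
      Finset.Ico_eq_empty_of_le hi.le, Finset.Ico_eq_empty_of_le (show i + 1 ≤ 0 by omega)]
    simp only [Finset.sum_empty]
    ring

lemma PartialSums.lt_add_one {t s : ℤ → ℝ} (hs : PartialSums t s) {i : ℤ} (hi : 0 < t i) :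
    s i < s (i + 1) := by
  rw [hs.2 i]
  linarith

lemma PartialSums.mul_natCast_le {t s : ℤ → ℝ} {T : ℝ} (hs : PartialSums t s)
    (ht : ∀ i, T ≤ t i) (m : ℕ) : T * m ≤ s m := by
  induction m with
  | zero => simp [hs.1]
  | succ m ih =>
    push_cast
    rw [hs.2, mul_add_one]
    linarith [ht m]

lemma ShadowsWith.dist_le_of_lt {ε : ℝ} {x : ℤ → M} {s : ℤ → ℝ} {y : M} {h : ℝ → ℝ}
    (hsh : ShadowsWith φ ε x s y h) (hφ0 : ∀ w, φ 0 w = w) {i : ℤ} (hi : s i < s (i + 1)) :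
    dist (φ (h (s i)) y) (x i) ≤ ε := by
  simpa [hφ0] using hsh i (s i) ⟨le_rfl, hi⟩

end Flow

theorem stmt_1_general {M : Type*} [MetricSpace M] (φ : ℝ → M → M)
    (hφ : IsFlow φ) (Λ : Set M)
    (hshad : ShadowingOn φ Λ) (x : M) (hcr : ChainRecurrentPt φ Λ x) :
    ∀ ε > (0 : ℝ), ∃ z ∈ Λ, dist z x ≤ ε ∧ ∃ h : ℝ → ℝ, IsRep h ∧
      ∀ T > (0 : ℝ), ∃ t > T, dist (φ (h t) z) x ≤ ε := by
  intro ε hε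
  obtain ⟨δ, hδ, hshadδ⟩ := hshad ε hε
  obtain ⟨N, hN, xs, ts, hx0, hxN, hxsΛ, hstep⟩ := hcr δ hδ
  have hpo := isPseudoOrbit_periodize hN (hxN.trans hx0.symm) hstep
  obtain ⟨s, hs⟩ := exists_partialSums (periodize N ts)
  obtain ⟨z, hzΛ, h, hh, hzsh⟩ :=
    hshadδ (periodize N xs) _ s (fun i => hxsΛ _ (Int.toNat_emod_lt hN i).le) hpo hs
  have hreturn (k : ℤ) : dist (φ (h (s (k * N))) z) x ≤ ε := by
    have := hzsh.dist_le_of_lt hφ.2.1 (i := k * N) (hs.lt_add_one (one_pos.trans_le (hpo _).1))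
    rwa [periodize_mul_self, hx0] at this
  refine ⟨z, hzΛ, ?_, h, hh, fun T _ => ?_⟩
  · simpa [hs.1, hh.2.2.2, hφ.2.1] using hreturn 0
  · obtain ⟨k, hk⟩ := exists_nat_gt T
    refine ⟨s (k * N), ?_, hreturn k⟩
    calc T < k := hk
      _ ≤ ((k * N : ℕ) : ℝ) := by exact_mod_cast Nat.le_mul_of_pos_right k hN
      _ ≤ s (k * N) := by simpa using hs.mul_natCast_le (fun i => (hpo i).1) (k * N)

/-- if `Λ` has the shadowing property and `x ∈ Λ` is chain-recurrent,
then for every `ε > 0` there are `z ∈ Λ` with `dist z x ≤ ε`, a reparametrization `h`,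
and arbitrarily large times `t` with `dist (φ (h t) z) x ≤ ε`. -/
theorem stmt_1 {M : Type*} [MetricSpace M] [CompactSpace M] (φ : ℝ → M → M)
    (hφ : IsFlow φ) (Λ : Set M) (hclosed : IsClosed Λ) (hinv : Invariant φ Λ)
    (hshad : ShadowingOn φ Λ) (x : M) (hx : x ∈ Λ) (hcr : ChainRecurrentPt φ Λ x) :
    ∀ ε > (0 : ℝ), ∃ z ∈ Λ, dist z x ≤ ε ∧ ∃ h : ℝ → ℝ, IsRep h ∧
      ∀ T > (0 : ℝ), ∃ t > T, dist (φ (h t) z) x ≤ ε :=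
  stmt_1_general φ hφ Λ hshad x hcr
end

section
/- Let φ be a continuous flow on a compact metric space M. If a periodic pseudo-orbit (obtained by infinitely concatenating a finite δ-1-pseudo-orbit from x to x) is ε-shadowed by a point z via a reparametrization h (an increasing homeomorphism of ℝ with h(0)=0), then x is non-wandering: for every T > 0 there is t > T with both d(z, x) ≤ ε and d(φ(h(t), z), x) ≤ ε. -/
open Set Filter Metric

variable {M : Type*} [MetricSpace M]

lemma ShadowsWith.dist_node_le {φ : ℝ → M → M} {ε : ℝ}
    {x : ℤ → M} {s : ℤ → ℝ} {y : M} {h : ℝ → ℝ} (hφ0 : ∀ y, φ 0 y = y)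
    (hsh : ShadowsWith φ ε x s y h) {i : ℤ} (hi : s i < s (i + 1)) :
    dist (φ (h (s i)) y) (x i) ≤ ε := by
  simpa [hφ0] using hsh i (s i) ⟨le_rfl, hi⟩

lemma PartialSums.intCast_le {t s : ℤ → ℝ} (hs : PartialSums t s) (ht : ∀ i, 1 ≤ t i)
    {i : ℤ} (hi : 0 ≤ i) : (i : ℝ) ≤ s i := by
  induction i, hi using Int.leInduction with
  | base => simp [hs.1]
  | succ i _ ih =>
    rw [hs.2 i]
    push_cast
    linarith [ht i]

theorem stmt_2_general {M : Type*} [MetricSpace M] (φ : ℝ → M → M)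
    (hφ : IsFlow φ) (δ ε : ℝ) (p : M)
    (x : ℤ → M) (t s : ℤ → ℝ) (k : ℤ) (hk : 0 < k)
    (hx0 : x 0 = p)
    (hper : ∀ i : ℤ, x (i + k) = x i ∧ t (i + k) = t i)
    (hpo : IsPseudoOrbit φ δ 1 x t) (hs : PartialSums t s)
    (z : M) (h : ℝ → ℝ) (hrep : IsRep h) (hshadow : ShadowsWith φ ε x s z h) :
    ∀ T > (0 : ℝ), ∃ τ > T, dist z p ≤ ε ∧ dist (φ (h τ) z) p ≤ ε := by
  intro T _
  have ht : ∀ i, 1 ≤ t i := fun i => (hpo i).1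
  have hnode : ∀ i, dist (φ (h (s i)) z) (x i) ≤ ε := fun i =>
    hshadow.dist_node_le hφ.2.1 (by rw [hs.2 i]; linarith [ht i])
  have hxper : Function.Periodic x k := fun i => (hper i).1
  obtain ⟨n, hn⟩ := exists_nat_gt T
  -- The node with index `n * k` is again `p`, and is reached after time at least `n > T`.
  refine ⟨s (n * k), ?_, ?_, ?_⟩
  · have hnk : (n : ℝ) ≤ ((n * k : ℤ) : ℝ) := by
      exact_mod_cast le_mul_of_one_le_right (Int.natCast_nonneg n) hk
    linarith [hs.intCast_le ht (by positivity : (0 : ℤ) ≤ n * k)]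
  · simpa [hs.1, hrep.2.2.2, hφ.2.1, hx0] using hnode 0
  · simpa [hxper.nat_mul_eq, hx0] using hnode (n * k)

/-- a shadowed periodic pseudo-orbit through `p` makes `p`
non-wandering: for every `T > 0` there is `t > T` with `dist z p ≤ ε` and
`dist (φ (h t) z) p ≤ ε`. -/
theorem stmt_2 {M : Type*} [MetricSpace M] [CompactSpace M] (φ : ℝ → M → M)
    (hφ : IsFlow φ) (δ ε : ℝ) (hδ : 0 < δ) (hε : 0 < ε) (p : M)
    (x : ℤ → M) (t s : ℤ → ℝ) (k : ℤ) (hk : 0 < k)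
    (hx0 : x 0 = p)
    (hper : ∀ i : ℤ, x (i + k) = x i ∧ t (i + k) = t i)
    (hpo : IsPseudoOrbit φ δ 1 x t) (hs : PartialSums t s)
    (z : M) (h : ℝ → ℝ) (hrep : IsRep h) (hshadow : ShadowsWith φ ε x s z h) :
    ∀ T > (0 : ℝ), ∃ τ > T, dist z p ≤ ε ∧ dist (φ (h τ) z) p ≤ ε :=
  stmt_2_general φ hφ δ ε p x t s k hk hx0 hper hpo hs z h hrep hshadow
end

section
/- Let φ be a continuous flow on a compact metric space M, let σ be a fixed point of φ, and suppose there is a neighborhood V of σ such that every point of V other than σ leaves V in positive or negative time (σ is dynamically isolated in V) and σ is the only fixed point in V. Assume Λ is a closed invariant non-wandering set containing σ, that σ is attached to Λ (accumulated by non-fixed points of Λ), and that the flow has the shadowing property on Λ. Further assume that every point z ∈ V whose forward orbit stays in V forever converges-to-stay near σ (i.e., belongs to the local stable set W^s_loc(σ)) and symmetrically for backward orbits (W^u_loc(σ)). Then there exists a non-fixed point z ∈ Λ with z ∈ W^s(σ) ∩ W^u(σ), i.e., a homoclinic loop attached to σ. -/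
open Set Filter Metric

variable {M : Type*} [MetricSpace M]

/-!
Shadow the pseudo-orbit that rests at `σ`, jumps to a point `y` close to a regular point `p`
near `σ`, follows the orbit of `y` for a long time `t` until it returns close to `p`, and
jumps back to rest at `σ` forever. The shadowing orbit `z` stays near `σ` in the past and in
the far future, so by the local stable/unstable hypotheses it lies in `Wˢ(σ) ∩ Wᵘ(σ)`. If the
whole orbit of `p` stayed in `V`, then `p` itself would be homoclinic; otherwise `p` leaves
at some time `a`, the orbit of `y` leaves near time `a` (or `t + a`) as well, and `z`, which
follows it, cannot be fixed.
-/

namespace IsFlow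

variable {φ : ℝ → M → M}

theorem map_map (hφ : IsFlow φ) (s t : ℝ) (x : M) : φ s (φ t x) = φ (s + t) x :=
  (hφ.2.2 s t x).symm

theorem continuous_map (hφ : IsFlow φ) (t : ℝ) : Continuous (φ t) :=
  hφ.1.comp (continuous_const.prodMk continuous_id)

theorem mem_Ws_of_forall_ge_mem (hφ : IsFlow φ) {σ z : M} {V : Set M} {T : ℝ}
    (hloc : ∀ z ∈ V, (∀ t : ℝ, 0 ≤ t → φ t z ∈ V) → z ∈ Ws φ σ)
    (hz : ∀ u, T ≤ u → φ u z ∈ V) : z ∈ Ws φ σ := by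
  have hT : φ T z ∈ Ws φ σ :=
    hloc _ (hz T le_rfl) fun t ht => hφ.map_map t T z ▸ hz _ (by linarith)
  refine (hT.comp (tendsto_atTop_add_const_right atTop (-T) tendsto_id)).congr fun u => ?_
  simp [hφ.map_map]

theorem mem_Wu_of_forall_le_mem (hφ : IsFlow φ) {σ z : M} {V : Set M} {T : ℝ}
    (hloc : ∀ z ∈ V, (∀ t : ℝ, t ≤ 0 → φ t z ∈ V) → z ∈ Wu φ σ)
    (hz : ∀ u, u ≤ T → φ u z ∈ V) : z ∈ Wu φ σ := by
  have hT : φ T z ∈ Wu φ σ :=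
    hloc _ (hz T le_rfl) fun t ht => hφ.map_map t T z ▸ hz _ (by linarith)
  refine (hT.comp (tendsto_atBot_add_const_right atBot (-T) tendsto_id)).congr fun u => ?_
  simp [hφ.map_map]

theorem homoclinicPt_of_forall_mem (hφ : IsFlow φ) {σ p : M} {V : Set M}
    (hWsloc : ∀ z ∈ V, (∀ t : ℝ, 0 ≤ t → φ t z ∈ V) → z ∈ Ws φ σ)
    (hWuloc : ∀ z ∈ V, (∀ t : ℝ, t ≤ 0 → φ t z ∈ V) → z ∈ Wu φ σ)
    (hp : ¬ IsFixed φ p) (hpV : ∀ t, φ t p ∈ V) : HomoclinicPt φ σ p :=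
  ⟨hp, hφ.mem_Ws_of_forall_ge_mem (T := 0) hWsloc fun u _ => hpV u,
    hφ.mem_Wu_of_forall_le_mem (T := 0) hWuloc fun u _ => hpV u⟩

/-- The time is `a` if `a ≥ 0` and `t + a` otherwise. -/
theorem exists_mem_Ico_dist_lt (hφ : IsFlow φ) {a t ε : ℝ} {y p : M} (hat : |a| < t)
    (hy : dist (φ a y) (φ a p) < ε) (hty : dist (φ a (φ t y)) (φ a p) < ε) :
    ∃ τ ∈ Ico 0 t, dist (φ τ y) (φ a p) < ε := by
  rcases le_or_gt 0 a with ha | ha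
  · exact ⟨a, ⟨ha, (le_abs_self a).trans_lt hat⟩, hy⟩
  · refine ⟨t + a, ⟨by linarith [neg_le_abs a], by linarith⟩, ?_⟩
    rwa [add_comm, ← hφ.map_map]

end IsFlow

section Excursion

/-- The pseudo-orbit resting at `σ` that leaves it at time `0` for `y`, follows the orbit of
`y` during time `t`, and then returns to `σ`. -/
def excursion {α : Type*} (σ y : α) (i : ℤ) : α := if i = 0 then y else σ

def excursionTimes (t : ℝ) (i : ℤ) : ℝ := if i = 0 then t else 1

def excursionSums (t : ℝ) (i : ℤ) : ℝ := if i ≤ 0 then i else t + (i - 1)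

theorem excursion_mem {α : Type*} {s : Set α} {σ y : α} (hσ : σ ∈ s) (hy : y ∈ s)
    (i : ℤ) : excursion σ y i ∈ s := by
  unfold excursion; split_ifs <;> assumption

theorem partialSums_excursion (t : ℝ) : PartialSums (excursionTimes t) (excursionSums t) := by
  refine ⟨by simp [excursionSums], fun i => ?_⟩
  rcases lt_trichotomy i 0 with hi | rfl | hi
  · simp only [excursionSums, excursionTimes, if_pos (by omega : i + 1 ≤ 0), if_pos hi.le,
      if_neg hi.ne]
    push_cast; ring
  · norm_num [excursionSums, excursionTimes]
  · simp only [excursionSums, excursionTimes, if_neg (by omega : ¬ i + 1 ≤ 0),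
      if_neg (by omega : ¬ i ≤ 0), if_neg hi.ne']
    push_cast; ring

theorem isPseudoOrbit_excursion {φ : ℝ → M → M} {σ y : M} {δ t : ℝ} (hσ : IsFixed φ σ)
    (hδ : 0 ≤ δ) (ht : 1 ≤ t) (hy : dist y σ ≤ δ) (hty : dist (φ t y) σ ≤ δ) :
    IsPseudoOrbit φ δ 1 (excursion σ y) (excursionTimes t) := by
  intro i
  by_cases hi : i = 0
  · subst hi; simpa [excursion, excursionTimes] using ⟨ht, hty⟩
  by_cases hi' : i + 1 = 0
  · simpa [excursion, excursionTimes, hi, hi', hσ 1, dist_comm] using hy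
  · simp [excursion, excursionTimes, hi, hi', hσ 1, hδ]

/-- Outside `[0, t)` the excursion is at `σ`. -/
theorem exists_ne_zero_mem_Ico_excursionSums {t τ : ℝ} (hτ : τ ∉ Ico 0 t) :
    ∃ i ≠ 0, τ ∈ Ico (excursionSums t i) (excursionSums t (i + 1)) := by
  rcases lt_or_ge τ 0 with hτ0 | hτ0
  · have hi : ⌊τ⌋ < 0 := Int.floor_lt.mpr (by exact_mod_cast hτ0)
    refine ⟨⌊τ⌋, hi.ne, ?_⟩
    simp only [excursionSums, if_pos hi.le, if_pos (by omega : ⌊τ⌋ + 1 ≤ 0)]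
    push_cast
    exact ⟨Int.floor_le τ, Int.lt_floor_add_one τ⟩
  · have htτ : t ≤ τ := by by_contra h; exact hτ ⟨hτ0, not_le.mp h⟩
    have hi : 0 ≤ ⌊τ - t⌋ := Int.floor_nonneg.mpr (by linarith)
    refine ⟨⌊τ - t⌋ + 1, by omega, ?_⟩
    simp only [excursionSums, if_neg (by omega : ¬ ⌊τ - t⌋ + 1 ≤ 0),
      if_neg (by omega : ¬ ⌊τ - t⌋ + 1 + 1 ≤ 0)]
    push_cast
    constructor <;> linarith [Int.floor_le (τ - t), Int.lt_floor_add_one (τ - t)]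

variable {φ : ℝ → M → M} {ε t : ℝ} {σ y z : M} {h : ℝ → ℝ}

theorem ShadowsWith.dist_excursion_le_of_notMem_Ico
    (hsh : ShadowsWith φ ε (excursion σ y) (excursionSums t) z h) (hσ : IsFixed φ σ)
    {τ : ℝ} (hτ : τ ∉ Ico 0 t) : dist (φ (h τ) z) σ ≤ ε := by
  obtain ⟨i, hi, hτi⟩ := exists_ne_zero_mem_Ico_excursionSums hτ
  simpa [excursion, hi, hσ _] using hsh i τ hτi

theorem ShadowsWith.dist_excursion_le_of_mem_Ico
    (hsh : ShadowsWith φ ε (excursion σ y) (excursionSums t) z h) {τ : ℝ}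
    (hτ : τ ∈ Ico 0 t) : dist (φ (h τ) z) (φ τ y) ≤ ε := by
  have hS : excursionSums t 0 = 0 ∧ excursionSums t (0 + 1) = t := by
    norm_num [excursionSums]
  simpa [excursion, hS.1] using hsh 0 τ (by rwa [hS.1, hS.2])

theorem ShadowsWith.dist_excursion_le
    (hsh : ShadowsWith φ ε (excursion σ y) (excursionSums t) z h) (hh : IsRep h)
    (hσ : IsFixed φ σ) {u : ℝ} (hu : u < 0 ∨ h t ≤ u) : dist (φ u z) σ ≤ ε := by
  obtain ⟨τ, rfl⟩ := hh.2.2.1 u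
  refine hsh.dist_excursion_le_of_notMem_Ico hσ fun hτ => ?_
  have h0 : 0 ≤ h τ := hh.2.2.2 ▸ hh.1.monotone hτ.1
  rcases hu with hu | hu
  · linarith
  · exact (hh.1 hτ.2).not_ge hu

/-- A fixed shadowing point is `ε`-close both to `σ` (in the past) and to the orbit of `y`,
whence the `2 * ε`. -/
theorem ShadowsWith.dist_excursion_le_of_isFixed
    (hsh : ShadowsWith φ ε (excursion σ y) (excursionSums t) z h) (hσ : IsFixed φ σ)
    (hz : IsFixed φ z) {τ : ℝ} (hτ : τ ∈ Ico 0 t) : dist (φ τ y) σ ≤ 2 * ε := by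
  have hzy := hsh.dist_excursion_le_of_mem_Ico hτ
  have hzσ := hsh.dist_excursion_le_of_notMem_Ico hσ (τ := -1) fun h => by linarith [h.1]
  rw [hz] at hzy hzσ
  linarith [dist_triangle (φ τ y) z σ, dist_comm (φ τ y) z]

end Excursion

theorem stmt_4_general {M : Type*} [MetricSpace M] (φ : ℝ → M → M)
    (hφ : IsFlow φ) (Λ : Set M)
    (hnw : ∀ p ∈ Λ, NonWanderingPt φ Λ p) (hshad : ShadowingOn φ Λ)
    (σ : M) (hσΛ : σ ∈ Λ) (hσfix : IsFixed φ σ) (hatt : Attached φ Λ σ)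
    (V : Set M) (hV : V ∈ nhds σ)
    (hWsloc : ∀ z ∈ V, (∀ t : ℝ, 0 ≤ t → φ t z ∈ V) → z ∈ Ws φ σ)
    (hWuloc : ∀ z ∈ V, (∀ t : ℝ, t ≤ 0 → φ t z ∈ V) → z ∈ Wu φ σ) :
    ∃ z ∈ Λ, HomoclinicPt φ σ z := by
  obtain ⟨r, hr, hrV⟩ := Metric.mem_nhds_iff.mp hV
  have hnear : ∀ w, dist w σ ≤ r / 4 → w ∈ V :=
    fun w hw => hrV (mem_ball.mpr (by linarith))
  obtain ⟨δ, hδ, hshadδ⟩ := hshad (r / 4) (by positivity)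
  obtain ⟨p, hpΛ, hpσ, hpreg⟩ := hatt (δ / 2) (by positivity)
  by_cases hpV : ∀ s, φ s p ∈ V
  · exact ⟨p, hpΛ, hφ.homoclinicPt_of_forall_mem hWsloc hWuloc hpreg hpV⟩
  obtain ⟨a, hapV⟩ := not_forall.mp hpV
  have hfar : r ≤ dist (φ a p) σ := not_lt.mp fun h => hapV (hrV (mem_ball.mpr h))
  obtain ⟨δ', hδ', hcont⟩ :=
    Metric.continuous_iff.mp (hφ.continuous_map a) p (r / 4) (by positivity)
  obtain ⟨y, hyΛ, hyp, t, htT, hty⟩ :=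
    hnw p hpΛ (min (δ / 2) (δ' / 2)) (by positivity) (max 1 |a|) (by positivity)
  have hη := min_le_left (δ / 2) (δ' / 2)
  have hη' := min_le_right (δ / 2) (δ' / 2)
  obtain ⟨z, hzΛ, h, hh, hsh⟩ := hshadδ _ _ _ (excursion_mem hσΛ hyΛ)
    (isPseudoOrbit_excursion hσfix hδ.le ((le_max_left _ _).trans htT.le)
      (by linarith [dist_triangle y p σ]) (by linarith [dist_triangle (φ t y) p σ]))
    (partialSums_excursion t)
  refine ⟨z, hzΛ, fun hz => ?_,
    hφ.mem_Ws_of_forall_ge_mem hWsloc fun u hu =>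
      hnear _ (hsh.dist_excursion_le hh hσfix (.inr hu)),
    hφ.mem_Wu_of_forall_le_mem (T := -1) hWuloc fun u hu =>
      hnear _ (hsh.dist_excursion_le hh hσfix (.inl (by linarith)))⟩
  obtain ⟨τ, hτ, hτa⟩ := hφ.exists_mem_Ico_dist_lt ((le_max_right _ _).trans_lt htT)
    (hcont y (by linarith)) (hcont _ (by linarith))
  linarith [hsh.dist_excursion_le_of_isFixed hσfix hz hτ, dist_triangle (φ a p) (φ τ y) σ,
    dist_comm (φ a p) (φ τ y)]

/-- a non-wandering closed invariant set with the shadowing property,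
containing an attached, dynamically isolated fixed point `σ` (whose local stable and
unstable sets in the isolating neighborhood consist of points converging to `σ`),
contains a homoclinic loop attached to `σ`. -/
theorem stmt_4 {M : Type*} [MetricSpace M] [CompactSpace M] (φ : ℝ → M → M)
    (hφ : IsFlow φ) (Λ : Set M) (hclosed : IsClosed Λ) (hinv : Invariant φ Λ)
    (hnw : ∀ p ∈ Λ, NonWanderingPt φ Λ p) (hshad : ShadowingOn φ Λ)
    (σ : M) (hσΛ : σ ∈ Λ) (hσfix : IsFixed φ σ) (hatt : Attached φ Λ σ)
    (V : Set M) (hV : V ∈ nhds σ)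
    (hiso : ∀ z ∈ V, z ≠ σ → ∃ t : ℝ, φ t z ∉ V)
    (huniq : ∀ z ∈ V, IsFixed φ z → z = σ)
    (hWsloc : ∀ z ∈ V, (∀ t : ℝ, 0 ≤ t → φ t z ∈ V) → z ∈ Ws φ σ)
    (hWuloc : ∀ z ∈ V, (∀ t : ℝ, t ≤ 0 → φ t z ∈ V) → z ∈ Wu φ σ) :
    ∃ z ∈ Λ, HomoclinicPt φ σ z :=
  stmt_4_general φ hφ Λ hnw hshad σ hσΛ hσfix hatt V hV hWsloc hWuloc
end

section
/- Let L_t = exp(tA) be a hyperbolic linear flow on E = E^s ⊕ E^u (both factors nontrivial), with ‖L_t|_{E^s}‖ ≤ C e^{−λt} and ‖L_{−t}|_{E^u}‖ ≤ C e^{−λt} for t ≥ 0. Let v_n = v_n^s + v_n^u be a sequence with v_n^s, v_n^u ≠ 0, ‖v_n^s‖ = ‖v_n^u‖, and v_n → 0. Fix r > 0 and let u_n = inf{t > 0 : ‖(L_t v_n)^u‖ = r} and w_n = inf{t > 0 : ‖(L_{−t} v_n)^s‖ = r} (exit times from the box {‖w^s‖, ‖w^u‖ ≤ r}, assuming the norms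 of components are monotone along orbits). Then u_n → ∞, w_n → ∞, dist(L_{u_n} v_n, E^u) → 0, and dist(L_{−w_n} v_n, E^s) → 0. -/
/-!
Along the unstable flow the norm grows at least like `e^{λt} ‖v‖ / C`, so every nonzero vector
inside the box reaches the level `r`, and by monotonicity it cannot do so before any time `T` at
which `‖L_T v‖ < r`. For fixed `T` this holds for all small `v`, so the exit times of `v_n → 0`
tend to `∞`. The complementary component at the exit time is bounded by `C ‖v_n‖ → 0`, since
the exit time is nonnegative. Running the stable flow backwards turns it into an unstable one and
gives the backward statements.
-/

open Filter

/-- Junk value `0` (that is, `sInf ∅`) when `f` never equals `r` at a positive time. -/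
noncomputable def exitTime (f : ℝ → ℝ) (r : ℝ) : ℝ :=
  sInf {t : ℝ | 0 < t ∧ f t = r}

lemma exitTime_nonneg (f : ℝ → ℝ) (r : ℝ) : 0 ≤ exitTime f r :=
  Real.sInf_nonneg fun _ ht => ht.1.le

lemma exists_pos_eq_of_lt_of_tendsto_atTop {f : ℝ → ℝ} (hf : Continuous f)
    (htop : Tendsto f atTop atTop) {r : ℝ} (h0 : f 0 < r) : ∃ t, 0 < t ∧ f t = r := by
  obtain ⟨T, hrT, hT⟩ := ((htop.eventually_ge_atTop r).and (eventually_ge_atTop 0)).exists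
  obtain ⟨t, ht, hft⟩ := intermediate_value_Icc hT hf.continuousOn ⟨h0.le, hrT⟩
  refine ⟨t, ht.1.lt_of_ne ?_, hft⟩
  rintro rfl
  exact h0.ne hft

lemma le_exitTime {f : ℝ → ℝ} (hf : Continuous f) (hmono : Monotone f)
    (htop : Tendsto f atTop atTop) {r T : ℝ} (hT : 0 ≤ T) (hfT : f T < r) :
    T ≤ exitTime f r :=
  le_csInf (exists_pos_eq_of_lt_of_tendsto_atTop hf htop ((hmono hT).trans_lt hfT))
    fun _ ⟨_, ht⟩ => (hmono.reflect_lt (ht ▸ hfT)).le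

section LinearFlow

variable {E : Type*} [NormedAddCommGroup E] [NormedSpace ℝ E]

lemma flow_neg_apply_apply {L : ℝ → E →ₗ[ℝ] E} (hL0 : L 0 = LinearMap.id)
    (hLadd : ∀ a b : ℝ, L (a + b) = (L a).comp (L b)) (t : ℝ) (v : E) :
    L (-t) (L t v) = v := by
  simpa [hL0] using (LinearMap.congr_fun (hLadd (-t) t) v).symm

lemma tendsto_norm_flow_atTop {L : ℝ → E →ₗ[ℝ] E} (hL0 : L 0 = LinearMap.id)
    (hLadd : ∀ a b : ℝ, L (a + b) = (L a).comp (L b)) {C lam : ℝ} (hC : 0 < C) (hlam : 0 < lam)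
    (hexpand : ∀ t : ℝ, 0 ≤ t → ∀ v : E, ‖L (-t) v‖ ≤ C * Real.exp (-lam * t) * ‖v‖)
    {v : E} (hv : v ≠ 0) :
    Tendsto (fun t => ‖L t v‖) atTop atTop := by
  have hgrowth : ∀ t, 0 ≤ t → ‖v‖ / C * Real.exp (lam * t) ≤ ‖L t v‖ := by
    intro t ht
    have h := hexpand t ht (L t v)
    rw [flow_neg_apply_apply hL0 hLadd, mul_assoc] at h
    rw [div_mul_eq_mul_div, div_le_iff₀ hC, ← le_div_iff₀ (Real.exp_pos _), div_eq_mul_inv,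
      ← Real.exp_neg, ← neg_mul, mul_comm]
    linarith
  have hexp : Tendsto (fun t => ‖v‖ / C * Real.exp (lam * t)) atTop atTop :=
    (Real.tendsto_exp_atTop.comp (tendsto_id.const_mul_atTop hlam)).const_mul_atTop
      (div_pos (norm_pos_iff.mpr hv) hC)
  exact tendsto_atTop_mono' _ ((eventually_ge_atTop 0).mono hgrowth) hexp

lemma tendsto_exitTime_flow_atTop [FiniteDimensional ℝ E] {L : ℝ → E →ₗ[ℝ] E}
    (hL0 : L 0 = LinearMap.id) (hLadd : ∀ a b : ℝ, L (a + b) = (L a).comp (L b))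
    (hLcont : ∀ v : E, Continuous fun t : ℝ => L t v) {C lam : ℝ} (hC : 0 < C) (hlam : 0 < lam)
    (hexpand : ∀ t : ℝ, 0 ≤ t → ∀ v : E, ‖L (-t) v‖ ≤ C * Real.exp (-lam * t) * ‖v‖)
    (hmono : ∀ v : E, v ≠ 0 → Monotone fun t : ℝ => ‖L t v‖) {r : ℝ} (hr : 0 < r)
    {ι : Type*} {l : Filter ι} {v : ι → E} (hv : ∀ i, v i ≠ 0) (hlim : Tendsto v l (nhds 0)) :
    Tendsto (fun i => exitTime (fun t => ‖L t (v i)‖) r) l atTop := by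
  refine tendsto_atTop.mpr fun b => ?_
  have hsmall : ∀ᶠ i in l, ‖L (max b 0) (v i)‖ < r := by
    have h := (((L (max b 0)).continuous_of_finiteDimensional.tendsto 0).comp hlim).norm
    rw [map_zero, norm_zero] at h
    exact h.eventually_lt_const hr
  filter_upwards [hsmall] with i hi
  exact (le_max_left b 0).trans <| le_exitTime (hLcont (v i)).norm (hmono (v i) (hv i))
    (tendsto_norm_flow_atTop hL0 hLadd hC hlam hexpand (hv i)) (le_max_right b 0) hi

end LinearFlow

lemma tendsto_norm_apply_nhds_zero_of_exp_bound {E : Type*} [SeminormedAddCommGroup E]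
    {L : ℝ → E → E} {C lam : ℝ} (hC : 0 ≤ C) (hlam : 0 < lam)
    (hbound : ∀ t : ℝ, 0 ≤ t → ∀ v : E, ‖L t v‖ ≤ C * Real.exp (-lam * t) * ‖v‖)
    {ι : Type*} {l : Filter ι} {τ : ι → ℝ} (hτ : ∀ i, 0 ≤ τ i) {v : ι → E}
    (hv : Tendsto (fun i => ‖v i‖) l (nhds 0)) :
    Tendsto (fun i => ‖L (τ i) (v i)‖) l (nhds 0) := by
  refine squeeze_zero (fun _ => norm_nonneg _) (fun i => ?_) (by simpa using hv.const_mul C)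
  have hexp : Real.exp (-lam * τ i) ≤ 1 :=
    Real.exp_le_one_iff.mpr (mul_nonpos_of_nonpos_of_nonneg (neg_nonpos.mpr hlam.le) (hτ i))
  calc ‖L (τ i) (v i)‖ ≤ C * Real.exp (-lam * τ i) * ‖v i‖ := hbound (τ i) (hτ i) (v i)
    _ ≤ C * 1 * ‖v i‖ := by gcongr
    _ = C * ‖v i‖ := by rw [mul_one]

theorem stmt_16_general {Es Eu : Type*}
    [NormedAddCommGroup Es] [NormedSpace ℝ Es] [FiniteDimensional ℝ Es]
    [NormedAddCommGroup Eu] [NormedSpace ℝ Eu] [FiniteDimensional ℝ Eu]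
    (Ls : ℝ → Es →ₗ[ℝ] Es) (Lu : ℝ → Eu →ₗ[ℝ] Eu)
    (hLs0 : Ls 0 = LinearMap.id) (hLsadd : ∀ a b : ℝ, Ls (a + b) = (Ls a).comp (Ls b))
    (hLu0 : Lu 0 = LinearMap.id) (hLuadd : ∀ a b : ℝ, Lu (a + b) = (Lu a).comp (Lu b))
    (hLscont : ∀ v : Es, Continuous fun t : ℝ => Ls t v)
    (hLucont : ∀ v : Eu, Continuous fun t : ℝ => Lu t v)
    (C lam : ℝ) (hC : 0 < C) (hlam : 0 < lam)
    (hcontract : ∀ t : ℝ, 0 ≤ t → ∀ v : Es, ‖Ls t v‖ ≤ C * Real.exp (-lam * t) * ‖v‖)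
    (hexpand : ∀ t : ℝ, 0 ≤ t → ∀ v : Eu, ‖Lu (-t) v‖ ≤ C * Real.exp (-lam * t) * ‖v‖)
    (hmono_s : ∀ v : Es, v ≠ 0 → StrictAnti fun t : ℝ => ‖Ls t v‖)
    (hmono_u : ∀ v : Eu, v ≠ 0 → StrictMono fun t : ℝ => ‖Lu t v‖)
    (r : ℝ) (hr : 0 < r)
    (vs : ℕ → Es) (vu : ℕ → Eu)
    (hvs : ∀ n, vs n ≠ 0) (hvu : ∀ n, vu n ≠ 0)
    (hdiag : ∀ n, ‖vs n‖ = ‖vu n‖)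
    (hlim : Tendsto (fun n => ‖vs n‖) atTop (nhds 0))
    (u w : ℕ → ℝ)
    (hu : ∀ n, u n = sInf {t : ℝ | 0 < t ∧ ‖Lu t (vu n)‖ = r})
    (hw : ∀ n, w n = sInf {t : ℝ | 0 < t ∧ ‖Ls (-t) (vs n)‖ = r}) :
    Tendsto u atTop atTop ∧ Tendsto w atTop atTop ∧
    Tendsto (fun n => ‖Ls (u n) (vs n)‖) atTop (nhds 0) ∧
    Tendsto (fun n => ‖Lu (-(w n)) (vu n)‖) atTop (nhds 0) := by
  have hlim_u : Tendsto (fun n => ‖vu n‖) atTop (nhds 0) := by simpa only [hdiag] using hlim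
  obtain rfl : u = fun n => exitTime (fun t => ‖Lu t (vu n)‖) r := funext hu
  obtain rfl : w = fun n => exitTime (fun t => ‖Ls (-t) (vs n)‖) r := funext hw
  refine ⟨?_, ?_, ?_, ?_⟩
  · exact tendsto_exitTime_flow_atTop hLu0 hLuadd hLucont hC hlam hexpand
      (fun v hv => (hmono_u v hv).monotone) hr hvu (tendsto_zero_iff_norm_tendsto_zero.mpr hlim_u)
  · exact tendsto_exitTime_flow_atTop (L := fun t => Ls (-t)) (by rw [neg_zero, hLs0])
      (fun a b => by rw [neg_add, hLsadd]) (fun v => (hLscont v).comp continuous_neg) hC hlam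
      (by simpa only [neg_neg] using hcontract)
      (fun v hv => (hmono_s v hv).antitone.comp monotone_id.neg) hr hvs
      (tendsto_zero_iff_norm_tendsto_zero.mpr hlim)
  · exact tendsto_norm_apply_nhds_zero_of_exp_bound hC.le hlam hcontract
      (fun _ => exitTime_nonneg _ _) hlim
  · exact tendsto_norm_apply_nhds_zero_of_exp_bound (L := fun t => Lu (-t)) hC.le hlam hexpand
      (fun _ => exitTime_nonneg _ _) hlim_u

/-- linear model of Lemma 5.5: for a hyperbolic linear flow on
`E = E^s ⊕ E^u` (modelled by its restrictions `Ls`, `Lu` to the factors, with monotone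
component norms along orbits), a sequence `v_n = v_n^s + v_n^u` on the diagonal cone
`‖v_n^s‖ = ‖v_n^u‖` tending to `0` has forward exit times `u_n` and backward exit times
`w_n` from the box of radius `r` tending to `∞`, and the exit points approach `E^u`
forward and `E^s` backward (i.e. the complementary components tend to `0`). -/
theorem stmt_16 {Es Eu : Type*}
    [NormedAddCommGroup Es] [NormedSpace ℝ Es] [FiniteDimensional ℝ Es]
    [NormedAddCommGroup Eu] [NormedSpace ℝ Eu] [FiniteDimensional ℝ Eu]
    [Nontrivial Es] [Nontrivial Eu]
    (Ls : ℝ → Es →ₗ[ℝ] Es) (Lu : ℝ → Eu →ₗ[ℝ] Eu)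
    (hLs0 : Ls 0 = LinearMap.id) (hLsadd : ∀ a b : ℝ, Ls (a + b) = (Ls a).comp (Ls b))
    (hLu0 : Lu 0 = LinearMap.id) (hLuadd : ∀ a b : ℝ, Lu (a + b) = (Lu a).comp (Lu b))
    (hLscont : ∀ v : Es, Continuous fun t : ℝ => Ls t v)
    (hLucont : ∀ v : Eu, Continuous fun t : ℝ => Lu t v)
    (C lam : ℝ) (hC : 0 < C) (hlam : 0 < lam)
    (hcontract : ∀ t : ℝ, 0 ≤ t → ∀ v : Es, ‖Ls t v‖ ≤ C * Real.exp (-lam * t) * ‖v‖)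
    (hexpand : ∀ t : ℝ, 0 ≤ t → ∀ v : Eu, ‖Lu (-t) v‖ ≤ C * Real.exp (-lam * t) * ‖v‖)
    (hmono_s : ∀ v : Es, v ≠ 0 → StrictAnti fun t : ℝ => ‖Ls t v‖)
    (hmono_u : ∀ v : Eu, v ≠ 0 → StrictMono fun t : ℝ => ‖Lu t v‖)
    (r : ℝ) (hr : 0 < r)
    (vs : ℕ → Es) (vu : ℕ → Eu)
    (hvs : ∀ n, vs n ≠ 0) (hvu : ∀ n, vu n ≠ 0)
    (hdiag : ∀ n, ‖vs n‖ = ‖vu n‖)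
    (hlim : Tendsto (fun n => ‖vs n‖) atTop (nhds 0))
    (u w : ℕ → ℝ)
    (hu : ∀ n, u n = sInf {t : ℝ | 0 < t ∧ ‖Lu t (vu n)‖ = r})
    (hw : ∀ n, w n = sInf {t : ℝ | 0 < t ∧ ‖Ls (-t) (vs n)‖ = r}) :
    Tendsto u atTop atTop ∧ Tendsto w atTop atTop ∧
    Tendsto (fun n => ‖Ls (u n) (vs n)‖) atTop (nhds 0) ∧
    Tendsto (fun n => ‖Lu (-(w n)) (vu n)‖) atTop (nhds 0) :=
  stmt_16_general Ls Lu hLs0 hLsadd hLu0 hLuadd hLscont hLucont C lam hC hlam hcontract hexpand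
    hmono_s hmono_u r hr vs vu hvs hvu hdiag hlim u w hu hw
end
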